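/- Fix an integer r ≥ 1. For each integer q ≥ 1 let c_q : ℕ → ℝ be a nonnegative sequence such that ∑_{p=0}^∞ c_q(p)·x^p = (1 − (r + 1/√(1−x))^{−2})^q for every real x ∈ [0,1). Then for every integer p ≥ 1, ∑_{q=1}^∞ h(q)·c_q(p) = h(p). -/

import Mathlib

/-- h(k) = 4^{−k}·binom(2k,k), with binom the central binomial coefficient. -/
noncomputable def hfun (k : ℕ) : ℝ := (Nat.choose (2 * k) k : ℝ) / 4 ^ k

/-!
The generating function of `h` is `∑ h(k) y^k = (1 - y)^{-1/2}`, and `g(x) = 1 - (r + (1 - x)^{-1/2})^{-2}`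
satisfies `(1 - g(x))^{-1/2} = r + (1 - x)^{-1/2}`. Hence `∑_{q ≥ 1} h(q) g(x)^q = r - 1 + ∑_p h(p) x^p`.
Expanding `g(x)^q = ∑_p c_q(p) x^p` and exchanging the two sums (all terms are nonnegative), the
sequences `p ↦ ∑_q h(q) c_q(p)` and `p ↦ h(p) + (r - 1)[p = 0]` have the same power series on `(0, 1)`,
so they coincide by the identity theorem.
-/

open Nat Real Set Filter Topology

lemma hfun_nonneg (k : ℕ) : 0 ≤ hfun k := by
  unfold hfun; positivity

lemma hfun_succ (k : ℕ) : hfun (k + 1) = hfun k * ((k + 1 / 2) / (k + 1)) := by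
  have h : ((k + 1 : ℕ) : ℝ) * centralBinom (k + 1) = 2 * (2 * k + 1) * centralBinom k := by
    exact_mod_cast succ_mul_centralBinom_succ k
  simp only [hfun, ← centralBinom_eq_two_mul_choose]
  push_cast at h
  rw [pow_succ]
  field_simp
  linear_combination 2 * h

lemma factorial_mul_hfun (n : ℕ) : n ! * hfun n = (ascPochhammer ℝ n).eval (1 / 2) := by
  induction n with
  | zero => simp [hfun]
  | succ n ih =>
    rw [ascPochhammer_succ_eval, ← ih, hfun_succ, factorial_succ]
    push_cast
    field_simp
    ring

lemma hfun_eq_choose (n : ℕ) : hfun n = Ring.choose ((1 / 2 : ℝ) + n - 1) n := by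
  rw [← Ring.multichoose_eq, ← mul_right_inj' (cast_ne_zero.2 n.factorial_ne_zero),
    factorial_mul_hfun, ← nsmul_eq_mul, Ring.factorial_nsmul_multichoose_eq_ascPochhammer,
    Polynomial.ascPochhammer_smeval_eq_eval]

lemma hasSum_hfun_mul_pow {y : ℝ} (hy : |y| < 1) :
    HasSum (fun k => hfun k * y ^ k) (1 / √(1 - y)) := by
  have := (one_div_one_sub_rpow_hasFPowerSeriesOnBall_zero (1 / 2)).hasSum (y := y)
    (by simpa [enorm_eq_nnnorm, ← NNReal.coe_lt_one] using hy)
  simp only [FormalMultilinearSeries.ofScalars_apply_eq, zero_add, smul_eq_mul] at this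
  simpa only [sqrt_eq_rpow, hfun_eq_choose] using this

lemma hasSum_hfun_succ_mul_pow_one_sub_zpow {t : ℝ} (ht : 1 ≤ t) :
    HasSum (fun q => hfun (q + 1) * (1 - t ^ (-2 : ℤ)) ^ (q + 1)) (t - 1) := by
  have hu : 0 < t⁻¹ ∧ t⁻¹ ≤ 1 := ⟨inv_pos.2 (zero_lt_one.trans_le ht), inv_le_one_of_one_le₀ ht⟩
  have hy : 1 - t ^ (-2 : ℤ) = 1 - t⁻¹ ^ 2 := by simp [zpow_neg]
  have := hasSum_hfun_mul_pow (y := 1 - t⁻¹ ^ 2) (abs_lt.2 ⟨by nlinarith, by nlinarith⟩)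
  rw [sub_sub_cancel, sqrt_sq hu.1.le, one_div, inv_inv] at this
  simpa [hy, hfun] using (hasSum_nat_add_iff' 1).2 this

theorem hasSum_uncurry_of_nonneg {α β : Type*} {f : α → β → ℝ} {g : α → ℝ} {s : ℝ}
    (hf : ∀ a b, 0 ≤ f a b) (hrow : ∀ a, HasSum (f a) (g a)) (hg : HasSum g s) :
    HasSum (Function.uncurry f) s := by
  have hsum : Summable (Function.uncurry f) :=
    (summable_prod_of_nonneg fun x => hf x.1 x.2).2
      ⟨fun a => (hrow a).summable, by simpa [(hrow _).tsum_eq] using hg.summable⟩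
  exact (hsum.hasSum.prod_fiberwise hrow).unique hg ▸ hsum.hasSum

theorem eq_zero_of_hasSum_pow_eq_zero {a : ℕ → ℝ} {ρ : ℝ} (hρ : 0 < ρ)
    (h : ∀ x ∈ Ioo 0 ρ, HasSum (fun n => a n * x ^ n) 0) : a = 0 := by
  set p := FormalMultilinearSeries.ofScalars ℝ a
  have hsum : ∀ x ∈ Ioo 0 ρ, p.sum x = 0 := fun x hx =>
    (FormalMultilinearSeries.ofScalars_sum_eq a x).trans (h x hx).tsum_eq
  have hrad : 0 < p.radius := by
    set r : NNReal := ⟨ρ / 2, by positivity⟩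
    have hr : (r : ℝ) ∈ Ioo 0 ρ := ⟨half_pos hρ, half_lt_self hρ⟩
    refine lt_of_lt_of_le (ENNReal.coe_pos.2 (NNReal.coe_pos.1 hr.1))
      (p.le_radius_of_tendsto (l := 0) ?_)
    simpa [p, FormalMultilinearSeries.ofScalars_norm] using
      (h r hr).summable.tendsto_atTop_zero.norm
  have hp := (p.hasFPowerSeriesOnBall hrad).hasFPowerSeriesAt
  rcases hp.analyticAt.eventually_eq_zero_or_eventually_ne_zero with hzero | hne
  · exact (FormalMultilinearSeries.ofScalars_series_eq_zero _).1 (hp.eq_zero_of_eventually hzero)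
  · have hpos : ∀ᶠ x in 𝓝[>] 0, x ∈ Ioo 0 ρ := Ioo_mem_nhdsGT hρ
    obtain ⟨x, hx, hne⟩ := (hpos.and (hne.filter_mono (nhdsGT_le_nhdsNE 0))).exists
    exact (hne (hsum x hx)).elim

theorem eq_of_hasSum_pow_eq {a b : ℕ → ℝ} {f : ℝ → ℝ} {ρ : ℝ} (hρ : 0 < ρ)
    (ha : ∀ x ∈ Ioo 0 ρ, HasSum (fun n => a n * x ^ n) (f x))
    (hb : ∀ x ∈ Ioo 0 ρ, HasSum (fun n => b n * x ^ n) (f x)) : a = b :=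
  sub_eq_zero.1 <| eq_zero_of_hasSum_pow_eq_zero hρ fun x hx => by
    simpa [sub_mul] using (ha x hx).sub (hb x hx)

theorem hasSum_prod_hfun_succ_mul_coeff_mul_pow {c : ℕ → ℕ → ℝ} {t x : ℝ} (ht : 1 ≤ t) (hx : 0 ≤ x)
    (hc : ∀ q p, 0 ≤ c q p)
    (hrow : ∀ q, HasSum (fun p => c (q + 1) p * x ^ p) ((1 - t ^ (-2 : ℤ)) ^ (q + 1))) :
    HasSum (fun z : ℕ × ℕ => hfun (z.2 + 1) * (c (z.2 + 1) z.1 * x ^ z.1)) (t - 1) :=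
  (Equiv.prodComm ℕ ℕ).hasSum_iff.2 <| hasSum_uncurry_of_nonneg
    (f := fun q p => hfun (q + 1) * (c (q + 1) p * x ^ p))
    (fun _ _ => mul_nonneg (hfun_nonneg _) (mul_nonneg (hc _ _) (pow_nonneg hx _)))
    (fun q => (hrow q).mul_left (hfun (q + 1)))
    (hasSum_hfun_succ_mul_pow_one_sub_zpow ht)

theorem stationary_measure_general (r : ℕ) (c : ℕ → ℕ → ℝ)
    (hc : ∀ q p, 0 ≤ c q p)
    (hsum : ∀ q : ℕ, 1 ≤ q → ∀ x : ℝ, 0 ≤ x → x < 1 →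
      HasSum (fun p : ℕ => c q p * x ^ p)
        ((1 - ((r : ℝ) + 1 / Real.sqrt (1 - x)) ^ (-2 : ℤ)) ^ q)) :
    ∀ p : ℕ, 1 ≤ p →
      HasSum (fun q : ℕ => hfun (q + 1) * c (q + 1) p) (hfun p) := by
  have hdouble : ∀ x ∈ Ioo (0 : ℝ) 1, HasSum
      (fun z : ℕ × ℕ => hfun (z.2 + 1) * (c (z.2 + 1) z.1 * x ^ z.1)) (r + 1 / √(1 - x) - 1) :=
    fun x ⟨hx0, hx1⟩ => hasSum_prod_hfun_succ_mul_coeff_mul_pow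
      (le_add_of_nonneg_of_le r.cast_nonneg
        (one_le_one_div (sqrt_pos.2 (by linarith)) (sqrt_le_one.2 (by linarith))))
      hx0.le hc fun q => hsum (q + 1) q.succ_pos x hx0.le hx1
  have hcol : ∀ p, Summable fun q => hfun (q + 1) * c (q + 1) p := fun p => by
    have := (hdouble (1 / 2) ⟨by norm_num, by norm_num⟩).summable.prod_factor p
    simp_rw [← mul_assoc] at this
    exact (summable_mul_right_iff (by positivity)).1 this
  have hA : (fun p => ∑' q, hfun (q + 1) * c (q + 1) p) =
      fun p => hfun p + if p = 0 then (r : ℝ) - 1 else 0 := by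
    refine eq_of_hasSum_pow_eq (f := fun x => r + 1 / √(1 - x) - 1) zero_lt_one
      (fun x hx => (hdouble x hx).prod_fiberwise fun p => by
        simpa only [mul_assoc] using (hcol p).hasSum.mul_right (x ^ p))
      (fun x hx => ?_)
    convert (hasSum_hfun_mul_pow (abs_lt.2 ⟨by linarith [hx.1], hx.2⟩)).add
      (hasSum_ite_eq 0 ((r : ℝ) - 1)) using 1
    · ext p; split_ifs with hp <;> simp [hp]
    · ring
  intro p hp
  have hAp : ∑' q, hfun (q + 1) * c (q + 1) p = hfun p := by
    simpa [one_le_iff_ne_zero.1 hp] using congrFun hA p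
  exact hAp ▸ (hcol p).hasSum

/-- Fix r ≥ 1. If for each q ≥ 1 the nonnegative sequence (c_q(p))_p satisfies
∑_p c_q(p)·x^p = (1 − (r + 1/√(1−x))^{−2})^q for all x ∈ [0,1), then for every
p ≥ 1 one has ∑_{q=1}^∞ h(q)·c_q(p) = h(p): the sequence (h(k))_{k≥1} is an
infinite stationary measure for the corresponding Galton–Watson process. -/
theorem stationary_measure (r : ℕ) (hr : 1 ≤ r) (c : ℕ → ℕ → ℝ)
    (hc : ∀ q p, 0 ≤ c q p)
    (hsum : ∀ q : ℕ, 1 ≤ q → ∀ x : ℝ, 0 ≤ x → x < 1 →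
      HasSum (fun p : ℕ => c q p * x ^ p)
        ((1 - ((r : ℝ) + 1 / Real.sqrt (1 - x)) ^ (-2 : ℤ)) ^ q)) :
    ∀ p : ℕ, 1 ≤ p →
      HasSum (fun q : ℕ => hfun (q + 1) * c (q + 1) p) (hfun p) :=
  stationary_measure_general r c hc hsum
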